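/- Define the spinorial first Sobolev squared norm of a smooth compactly supported phi : (0,π) × (0,2π) → ℂ^2 by N(phi) := ∫ ( |phi|^2 + |∂_theta phi|^2 + |(1/sin(theta))*∂_phi_angle phi + i*sigma_z*(cot(theta)/2)*phi|^2 ) sin(theta) dtheta dphi_angle, the integral being over (0,π) × (0,2π). Then: (a) for every smooth compactly supported phi, ∫ |∂_phi_angle phi|^2 sin(theta) dtheta dphi_angle ≤ N(phi); (b) for every kappa > 0 there exists a constant C > 0 such that for every measurable F : (0,π) → ℝ with |F(theta)| ≤ kappa * sin(theta) for all theta, and every smooth compactly supported phi, ∫ |F(theta) * (∂_theta phi + (cot(theta)/2)*phi)|^2 sin(theta) dtheta dphi_angle ≤ C * N(phi). -/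

import Mathlib

noncomputable section

open Complex MeasureTheory

/-- The Pauli matrix `σ_x`. -/
def sigmaX : Matrix (Fin 2) (Fin 2) ℂ := !![0, 1; 1, 0]

/-- The Pauli matrix `σ_y`. -/
def sigmaY : Matrix (Fin 2) (Fin 2) ℂ := !![0, -I; I, 0]

/-- The Pauli matrix `σ_z`. -/
def sigmaZ : Matrix (Fin 2) (Fin 2) ℂ := !![1, 0; 0, -1]

/-- Partial derivative in the first variable `θ`. -/
def pdTheta (phi : ℝ × ℝ → Fin 2 → ℂ) (p : ℝ × ℝ) : Fin 2 → ℂ :=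
  deriv (fun t : ℝ => phi (t, p.2)) p.1

/-- Partial derivative in the second variable `φ`. -/
def pdPhi (phi : ℝ × ℝ → Fin 2 → ℂ) (p : ℝ × ℝ) : Fin 2 → ℂ :=
  deriv (fun t : ℝ => phi (p.1, t)) p.2

/-- The Dirac operator on the 2-sphere acting on spinors. -/
def slDs (phi : ℝ × ℝ → Fin 2 → ℂ) (p : ℝ × ℝ) : Fin 2 → ℂ :=
  I • sigmaX.mulVec
      (pdTheta phi p + ((Real.cos p.1 / Real.sin p.1 / 2 : ℝ) : ℂ) • phi p) -
    I • sigmaY.mulVec ((((Real.sin p.1)⁻¹ : ℝ) : ℂ) • pdPhi phi p)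

/-- Squared `ℂ²` norm. -/
def nsq (v : Fin 2 → ℂ) : ℝ := ∑ i, Complex.normSq (v i)

/-- The coordinate rectangle `(0,π) × (0,2π)` of the sphere. -/
def sphereRect : Set (ℝ × ℝ) := Set.Ioo 0 Real.pi ×ˢ Set.Ioo 0 (2 * Real.pi)

/-- The spinorial covariant derivative `∇_{e₂} φ = (1/sinθ)∂_φ φ + i σ_z (cotθ/2) φ`. -/
def covE2 (phi : ℝ × ℝ → Fin 2 → ℂ) (p : ℝ × ℝ) : Fin 2 → ℂ :=
  (((Real.sin p.1)⁻¹ : ℝ) : ℂ) • pdPhi phi p +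
    (I * ((Real.cos p.1 / Real.sin p.1 / 2 : ℝ) : ℂ)) • sigmaZ.mulVec (phi p)


/-- The squared spinorial first Sobolev norm `N(φ)`. -/
def sobN (phi : ℝ × ℝ → Fin 2 → ℂ) : ℝ :=
  ∫ p in sphereRect,
    (nsq (phi p) + nsq (pdTheta phi p) + nsq (covE2 phi p)) * Real.sin p.1

/- ### Auxiliary lemmas -/

lemma sigmaZ_mulVec (v : Fin 2 → ℂ) : sigmaZ.mulVec v = ![v 0, -v 1] := by
  funext i
  fin_cases i <;>
    simp [sigmaZ, Matrix.mulVec, dotProduct, Fin.sum_univ_two]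

lemma key1 (s c : ℝ) (hs : 0 ≤ s) (h1 : s^2 + c^2 = 1) (a q z : ℂ)
    (hz : ‖z‖ ≤ s*‖a‖ + |c|/2*‖q‖) :
    Complex.normSq z ≤ Complex.normSq a + Complex.normSq q := by
  have h2 : Complex.normSq z = ‖z‖^2 := by
    rw [Complex.sq_norm]
  have h3 : Complex.normSq a = ‖a‖^2 := by rw [Complex.sq_norm]
  have h4 : Complex.normSq q = ‖q‖^2 := by rw [Complex.sq_norm]
  have hc2 : |c|^2 = c^2 := sq_abs c
  rw [h2, h3, h4]
  nlinarith [norm_nonneg z, norm_nonneg a, norm_nonneg q, abs_nonneg c,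
    sq_nonneg ((|c|)*‖a‖ - s*‖q‖), sq_nonneg (s*‖a‖), sq_nonneg c, sq_nonneg s,
    mul_nonneg (mul_nonneg hs (norm_nonneg a)) (mul_nonneg (abs_nonneg c) (norm_nonneg q))]

lemma nsq_nonneg' (v : Fin 2 → ℂ) : 0 ≤ nsq v :=
  Finset.sum_nonneg fun i _ => Complex.normSq_nonneg _

lemma nsq_smul (z : ℂ) (v : Fin 2 → ℂ) : nsq (z • v) = Complex.normSq z * nsq v := by
  simp [nsq, Complex.normSq_mul, Finset.mul_sum, Fin.sum_univ_two, mul_add]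

lemma normSq_add_le (x y : ℂ) :
    Complex.normSq (x + y) ≤ 2 * Complex.normSq x + 2 * Complex.normSq y := by
  simp only [Complex.normSq_apply, Complex.add_re, Complex.add_im]
  nlinarith [sq_nonneg (x.re - y.re), sq_nonneg (x.im - y.im)]

lemma nsq_add_le (a b : Fin 2 → ℂ) : nsq (a + b) ≤ 2 * nsq a + 2 * nsq b := by
  simp only [nsq, Fin.sum_univ_two, Pi.add_apply]
  have h0 := normSq_add_le (a 0) (b 0)
  have h1 := normSq_add_le (a 1) (b 1)
  linarith

lemma continuous_nsq : Continuous nsq :=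
  continuous_finset_sum _ fun i _ => Complex.continuous_normSq.comp (continuous_apply i)

section phi
variable {phi : ℝ × ℝ → Fin 2 → ℂ}

lemma pdTheta_eq (hphi : ContDiff ℝ (⊤ : ℕ∞) phi) :
    pdTheta phi = fun p => fderiv ℝ phi p (1, 0) := by
  funext p
  have h1 : HasDerivAt (fun t : ℝ => (t, p.2)) ((1:ℝ), (0:ℝ)) p.1 :=
    (hasDerivAt_id p.1).prodMk (hasDerivAt_const p.1 p.2)
  have h2 : HasFDerivAt phi (fderiv ℝ phi p) p :=
    (hphi.differentiable (by simp)).differentiableAt.hasFDerivAt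
  have h3 : HasDerivAt (fun t : ℝ => phi (t, p.2)) (fderiv ℝ phi p (1, 0)) p.1 := by
    have := h2.comp_hasDerivAt p.1 h1
    exact this
  exact h3.deriv

lemma pdPhi_eq (hphi : ContDiff ℝ (⊤ : ℕ∞) phi) :
    pdPhi phi = fun p => fderiv ℝ phi p (0, 1) := by
  funext p
  have h1 : HasDerivAt (fun t : ℝ => (p.1, t)) ((0:ℝ), (1:ℝ)) p.2 :=
    (hasDerivAt_const p.2 p.1).prodMk (hasDerivAt_id p.2)
  have h2 : HasFDerivAt phi (fderiv ℝ phi p) p :=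
    (hphi.differentiable (by simp)).differentiableAt.hasFDerivAt
  have h3 : HasDerivAt (fun t : ℝ => phi (p.1, t)) (fderiv ℝ phi p (0, 1)) p.2 := by
    have := h2.comp_hasDerivAt p.2 h1
    exact this
  exact h3.deriv

lemma vanish (hphi : ContDiff ℝ (⊤ : ℕ∞) phi) {p : ℝ × ℝ} (hp : p ∉ tsupport phi) :
    phi p = 0 ∧ pdTheta phi p = 0 ∧ pdPhi phi p = 0 ∧ covE2 phi p = 0 := by
  have h0 : phi p = 0 := image_eq_zero_of_notMem_tsupport hp
  have hf : fderiv ℝ phi p = 0 := by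
    by_contra h
    exact hp (support_fderiv_subset ℝ (by simpa [Function.mem_support] using h))
  have h1 : pdTheta phi p = 0 := by rw [pdTheta_eq hphi]; simp [hf]
  have h2 : pdPhi phi p = 0 := by rw [pdPhi_eq hphi]; simp [hf]
  refine ⟨h0, h1, h2, ?_⟩
  simp [covE2, h0, h2, Matrix.mulVec_zero]

lemma cont_pdTheta (hphi : ContDiff ℝ (⊤ : ℕ∞) phi) : Continuous (pdTheta phi) := by
  rw [pdTheta_eq hphi]
  exact (hphi.continuous_fderiv (by simp)).clm_apply continuous_const

lemma cont_pdPhi (hphi : ContDiff ℝ (⊤ : ℕ∞) phi) : Continuous (pdPhi phi) := by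
  rw [pdPhi_eq hphi]
  exact (hphi.continuous_fderiv (by simp)).clm_apply continuous_const

lemma cont_covE2 (hphi : ContDiff ℝ (⊤ : ℕ∞) phi) (hsupp : tsupport phi ⊆ sphereRect) :
    Continuous (covE2 phi) := by
  rw [continuous_iff_continuousAt]
  intro x
  by_cases hx : x ∈ tsupport phi
  · have hx' : x ∈ sphereRect := hsupp hx
    have hs : Real.sin x.1 ≠ 0 :=
      ne_of_gt (Real.sin_pos_of_pos_of_lt_pi hx'.1.1 hx'.1.2)
    have hsin : ContinuousAt (fun p : ℝ × ℝ => Real.sin p.1) x :=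
      (Real.continuous_sin.comp continuous_fst).continuousAt
    have hcos : ContinuousAt (fun p : ℝ × ℝ => Real.cos p.1) x :=
      (Real.continuous_cos.comp continuous_fst).continuousAt
    have hmv : Continuous (fun p => sigmaZ.mulVec (phi p)) := by
      apply continuous_pi
      intro i
      simp only [Matrix.mulVec, dotProduct, Fin.sum_univ_two]
      exact (continuous_const.mul ((continuous_apply (0:Fin 2)).comp hphi.continuous)).add
        (continuous_const.mul ((continuous_apply (1:Fin 2)).comp hphi.continuous))
    apply ContinuousAt.add
    · exact (Complex.continuous_ofReal.continuousAt.comp (hsin.inv₀ hs)).smul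
        (cont_pdPhi hphi).continuousAt
    · exact (continuousAt_const.mul (Complex.continuous_ofReal.continuousAt.comp
        (((hcos.div hsin hs)).div_const 2))).smul hmv.continuousAt
  · have hopen : IsOpen (tsupport phi)ᶜ := (isClosed_tsupport phi).isOpen_compl
    have heq : covE2 phi =ᶠ[nhds x] (fun _ => 0) := by
      filter_upwards [hopen.mem_nhds hx] with y hy
      exact (vanish hphi hy).2.2.2
    exact ContinuousAt.congr continuousAt_const heq.symm

lemma pdPhi_comp (hphi : ContDiff ℝ (⊤ : ℕ∞) phi) (p : ℝ × ℝ) (hs : Real.sin p.1 ≠ 0) (i : Fin 2) :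
    pdPhi phi p i = (Real.sin p.1 : ℂ) * covE2 phi p i
      - (I * ((Real.cos p.1 / 2 : ℝ) : ℂ)) * sigmaZ.mulVec (phi p) i := by
  have hs' : (Real.sin p.1 : ℂ) ≠ 0 := Complex.ofReal_ne_zero.mpr hs
  have hs'' : Complex.sin (p.1 : ℂ) ≠ 0 := by rw [← Complex.ofReal_sin]; exact hs'
  simp only [covE2, Pi.add_apply, Pi.smul_apply, smul_eq_mul, Complex.ofReal_inv,
    Complex.ofReal_div, Complex.ofReal_ofNat]
  field_simp [hs'']
  ring

lemma sobN_integrable (hphi : ContDiff ℝ (⊤ : ℕ∞) phi) (hc : HasCompactSupport phi)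
    (hsupp : tsupport phi ⊆ sphereRect) :
    IntegrableOn
      (fun p => (nsq (phi p) + nsq (pdTheta phi p) + nsq (covE2 phi p)) * Real.sin p.1)
      sphereRect volume := by
  have hcont : Continuous
      (fun p => (nsq (phi p) + nsq (pdTheta phi p) + nsq (covE2 phi p)) * Real.sin p.1) := by
    exact (((continuous_nsq.comp hphi.continuous).add
      (continuous_nsq.comp (cont_pdTheta hphi))).add
      (continuous_nsq.comp (cont_covE2 hphi hsupp))).mul
      (Real.continuous_sin.comp continuous_fst)
  have hcs : HasCompactSupport
      (fun p => (nsq (phi p) + nsq (pdTheta phi p) + nsq (covE2 phi p)) * Real.sin p.1) := by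
    apply HasCompactSupport.intro hc
    intro x hx
    obtain ⟨h0, h1, _, h3⟩ := vanish hphi hx
    simp [h0, h1, h3, nsq]
  exact (hcont.integrable_of_hasCompactSupport hcs).integrableOn

/-- pointwise bound for part (a). -/
lemma pointwise_a (hphi : ContDiff ℝ (⊤ : ℕ∞) phi) {p : ℝ × ℝ} (hp : p ∈ sphereRect) :
    nsq (pdPhi phi p) * Real.sin p.1 ≤
      (nsq (phi p) + nsq (pdTheta phi p) + nsq (covE2 phi p)) * Real.sin p.1 := by
  have hs : 0 < Real.sin p.1 := Real.sin_pos_of_pos_of_lt_pi hp.1.1 hp.1.2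
  have hsc : Real.sin p.1 ^ 2 + Real.cos p.1 ^ 2 = 1 := Real.sin_sq_add_cos_sq p.1
  have hbound : ∀ i : Fin 2, ‖pdPhi phi p i‖ ≤
      Real.sin p.1 * ‖covE2 phi p i‖ + |Real.cos p.1| / 2 * ‖phi p i‖ := by
    intro i
    rw [pdPhi_comp hphi p hs.ne']
    have hmv : ‖sigmaZ.mulVec (phi p) i‖ = ‖phi p i‖ := by
      rw [sigmaZ_mulVec]
      fin_cases i <;> simp
    calc ‖(Real.sin p.1 : ℂ) * covE2 phi p i
          - (I * ((Real.cos p.1 / 2 : ℝ) : ℂ)) * sigmaZ.mulVec (phi p) i‖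
        ≤ ‖(Real.sin p.1 : ℂ) * covE2 phi p i‖
            + ‖(I * ((Real.cos p.1 / 2 : ℝ) : ℂ)) * sigmaZ.mulVec (phi p) i‖ :=
          norm_sub_le _ _
      _ = Real.sin p.1 * ‖covE2 phi p i‖ + |Real.cos p.1| / 2 * ‖phi p i‖ := by
          rw [norm_mul, norm_mul, norm_mul, hmv, Complex.norm_I, Complex.norm_real,
            Complex.norm_real, Real.norm_eq_abs, Real.norm_eq_abs, abs_of_pos hs, one_mul,
            abs_div, _root_.abs_two]
  have h0 := key1 (Real.sin p.1) (Real.cos p.1) hs.le hsc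
    (covE2 phi p 0) (phi p 0) (pdPhi phi p 0) (hbound 0)
  have h1 := key1 (Real.sin p.1) (Real.cos p.1) hs.le hsc
    (covE2 phi p 1) (phi p 1) (pdPhi phi p 1) (hbound 1)
  have hkey : nsq (pdPhi phi p) ≤ nsq (phi p) + nsq (pdTheta phi p) + nsq (covE2 phi p) := by
    have ht := nsq_nonneg' (pdTheta phi p)
    simp only [nsq, Fin.sum_univ_two] at *
    linarith
  exact mul_le_mul_of_nonneg_right hkey hs.le

end phi

theorem stmt15 :
    (∀ phi : ℝ × ℝ → Fin 2 → ℂ, ContDiff ℝ (⊤ : ℕ∞) phi → HasCompactSupport phi →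
      tsupport phi ⊆ sphereRect →
      (∫ p in sphereRect, nsq (pdPhi phi p) * Real.sin p.1) ≤ sobN phi) ∧
    ∀ κ : ℝ, 0 < κ → ∃ C : ℝ, 0 < C ∧
      ∀ F : ℝ → ℝ, Measurable F → (∀ θ ∈ Set.Ioo 0 Real.pi, |F θ| ≤ κ * Real.sin θ) →
        ∀ phi : ℝ × ℝ → Fin 2 → ℂ, ContDiff ℝ (⊤ : ℕ∞) phi → HasCompactSupport phi →
          tsupport phi ⊆ sphereRect →
          (∫ p in sphereRect,
              nsq (((F p.1 : ℝ) : ℂ) •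
                (pdTheta phi p +
                  ((Real.cos p.1 / Real.sin p.1 / 2 : ℝ) : ℂ) • phi p)) *
                Real.sin p.1) ≤ C * sobN phi := by
  have hm : MeasurableSet sphereRect := measurableSet_Ioo.prod measurableSet_Ioo
  constructor
  · intro phi hphi hc hsupp
    rw [sobN]
    apply integral_mono_of_nonneg
    · filter_upwards [ae_restrict_mem hm] with p hp
      exact mul_nonneg (nsq_nonneg' _)
        (Real.sin_nonneg_of_nonneg_of_le_pi hp.1.1.le hp.1.2.le)
    · exact sobN_integrable hphi hc hsupp
    · filter_upwards [ae_restrict_mem hm] with p hp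
      exact pointwise_a hphi hp
  · intro κ hκ
    refine ⟨2 * κ^2, by positivity, ?_⟩
    intro F _ hF phi hphi hc hsupp
    have hint := sobN_integrable hphi hc hsupp
    have hptwise : ∀ p ∈ sphereRect,
        nsq (((F p.1 : ℝ) : ℂ) •
            (pdTheta phi p + ((Real.cos p.1 / Real.sin p.1 / 2 : ℝ) : ℂ) • phi p)) *
            Real.sin p.1 ≤
        2 * κ^2 * ((nsq (phi p) + nsq (pdTheta phi p) + nsq (covE2 phi p)) * Real.sin p.1) := by
      intro p hp
      set s := Real.sin p.1 with hsdef
      set c := Real.cos p.1 with hcdef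
      have hs : 0 < s := Real.sin_pos_of_pos_of_lt_pi hp.1.1 hp.1.2
      have hsc : s ^ 2 + c ^ 2 = 1 := Real.sin_sq_add_cos_sq p.1
      have hF2 : (F p.1)^2 ≤ κ^2 * s^2 := by
        have h := hF p.1 hp.1
        have h2 : |F p.1|^2 ≤ (κ * s)^2 := by
          apply pow_le_pow_left₀ (abs_nonneg _) h
        rw [_root_.sq_abs] at h2
        nlinarith
      have hnsq : nsq (((F p.1 : ℝ) : ℂ) •
          (pdTheta phi p + ((c / s / 2 : ℝ) : ℂ) • phi p)) =
          (F p.1)^2 * nsq (pdTheta phi p + ((c / s / 2 : ℝ) : ℂ) • phi p) := by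
        rw [nsq_smul]
        congr 1
        rw [Complex.normSq_ofReal]
        ring
      have hadd : nsq (pdTheta phi p + ((c / s / 2 : ℝ) : ℂ) • phi p) ≤
          2 * nsq (pdTheta phi p) + 2 * ((c / s / 2)^2 * nsq (phi p)) := by
        have h := nsq_add_le (pdTheta phi p) (((c / s / 2 : ℝ) : ℂ) • phi p)
        rw [nsq_smul, Complex.normSq_ofReal] at h
        have he : (c / s / 2) * (c / s / 2) = (c / s / 2)^2 := (sq (c/s/2)).symm
        rw [he] at h
        linarith
      have hc2 : c^2 ≤ 1 := by nlinarith [sq_nonneg s]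
      have hs2 : s^2 ≤ 1 := by nlinarith [sq_nonneg c]
      have hfld : (c / s / 2)^2 * s^2 = c^2 / 4 := by
        field_simp
        ring
      have hT := nsq_nonneg' (pdTheta phi p)
      have hX := nsq_nonneg' (phi p)
      have hE := nsq_nonneg' (covE2 phi p)
      rw [hnsq]
      have hw := nsq_nonneg' (pdTheta phi p + ((c / s / 2 : ℝ) : ℂ) • phi p)
      -- chain of inequalities
      have step1 : (F p.1)^2 * nsq (pdTheta phi p + ((c / s / 2 : ℝ) : ℂ) • phi p)
          ≤ κ^2 * s^2 * (2 * nsq (pdTheta phi p) + 2 * ((c / s / 2)^2 * nsq (phi p))) := by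
        apply mul_le_mul hF2 hadd hw (by positivity)
      have step2 : κ^2 * s^2 * (2 * nsq (pdTheta phi p) + 2 * ((c / s / 2)^2 * nsq (phi p)))
          = κ^2 * (2 * s^2 * nsq (pdTheta phi p) + (c^2 / 2) * nsq (phi p)) := by
        linear_combination (2 * κ^2 * nsq (phi p)) * hfld
      have step3 : κ^2 * (2 * s^2 * nsq (pdTheta phi p) + (c^2 / 2) * nsq (phi p))
          ≤ 2 * κ^2 * (nsq (phi p) + nsq (pdTheta phi p) + nsq (covE2 phi p)) := by
        have hAB : 2 * s^2 * nsq (pdTheta phi p) + (c^2 / 2) * nsq (phi p)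
            ≤ 2 * (nsq (phi p) + nsq (pdTheta phi p) + nsq (covE2 phi p)) := by
          have g1 : 0 ≤ (1 - s^2) * nsq (pdTheta phi p) := mul_nonneg (by linarith) hT
          have g2 : 0 ≤ (1 - c^2) * nsq (phi p) := mul_nonneg (by linarith) hX
          nlinarith
        have := mul_le_mul_of_nonneg_left hAB (sq_nonneg κ)
        linarith
      calc (F p.1)^2 * nsq (pdTheta phi p + ((c / s / 2 : ℝ) : ℂ) • phi p) * s
          ≤ 2 * κ^2 * (nsq (phi p) + nsq (pdTheta phi p) + nsq (covE2 phi p)) * s := by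
            apply mul_le_mul_of_nonneg_right _ hs.le
            calc _ ≤ _ := step1
              _ = _ := step2
              _ ≤ _ := step3
        _ = 2 * κ^2 * ((nsq (phi p) + nsq (pdTheta phi p) + nsq (covE2 phi p)) * s) := by ring
    calc (∫ p in sphereRect,
            nsq (((F p.1 : ℝ) : ℂ) •
              (pdTheta phi p + ((Real.cos p.1 / Real.sin p.1 / 2 : ℝ) : ℂ) • phi p)) *
              Real.sin p.1)
        ≤ ∫ p in sphereRect,
            2 * κ^2 * ((nsq (phi p) + nsq (pdTheta phi p) + nsq (covE2 phi p)) * Real.sin p.1) := by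
          apply integral_mono_of_nonneg
          · filter_upwards [ae_restrict_mem hm] with p hp
            exact mul_nonneg (nsq_nonneg' _)
              (Real.sin_nonneg_of_nonneg_of_le_pi hp.1.1.le hp.1.2.le)
          · exact hint.const_mul _
          · filter_upwards [ae_restrict_mem hm] with p hp
            exact hptwise p hp
      _ = 2 * κ^2 * sobN phi := by
          rw [sobN, integral_const_mul]

end
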